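/- Suppose 1 > α_cs/α_ls > β_cs/β_ls, and let Θ_c = α_sa(1 - α_cs/α_ls)/(β_ls(α_cs/α_ls - β_cs/β_ls)) > 0. Then 𝒩₁(Θ) > 𝒩₂(Θ) for all 0 < Θ < Θ_c, and 𝒩₁(Θ) < 𝒩₂(Θ) for all Θ > Θ_c. -/

import Mathlib

/-!
Both curves have the form `Θ / ρ + Θ η / (ρ (1 + ξ Θ))`, so `𝒩₂(Θ) < 𝒩₁(Θ)` iff
`η₂ (1 + ξ₁ Θ) < η₁ (1 + ξ₂ Θ)`, a comparison of two affine functions of `Θ` whose difference is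
`(η₁ - η₂) - (η₂ ξ₁ - η₁ ξ₂) Θ`. In the model both coefficients are the common positive factor
`(α_as + α_al) α_al α_lc / (α_sa α_cs (α_ls + α_al) (α_ls + α_lc) D)` times `α_ls - α_cs` and
`(α_cs β_ls - α_ls β_cs) / α_sa` respectively, so the difference changes sign exactly at `Θ_c`.
-/

namespace Switch

noncomputable def response (ρ η ξ Θ : ℝ) : ℝ := Θ / ρ + Θ * η / (ρ * (1 + ξ * Θ))

lemma response_lt_response_iff {ρ η ξ η' ξ' Θ : ℝ} (hρ : 0 < ρ) (hΘ : 0 < Θ)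
    (hξ : 0 ≤ ξ) (hξ' : 0 ≤ ξ') :
    response ρ η ξ Θ < response ρ η' ξ' Θ ↔ η * (1 + ξ' * Θ) < η' * (1 + ξ * Θ) := by
  have hd : 0 < 1 + ξ * Θ := by positivity
  have hd' : 0 < 1 + ξ' * Θ := by positivity
  have hρΘ : 0 < ρ * Θ := mul_pos hρ hΘ
  rw [response, response, add_lt_add_iff_left, div_lt_div_iff₀ (by positivity) (by positivity)]
  constructor <;> intro h <;> nlinarith

lemma response_lt_response_iff_of_crossing {ρ η₁ ξ₁ η₂ ξ₂ Θc Θ : ℝ} (hρ : 0 < ρ) (hΘ : 0 < Θ)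
    (hξ₁ : 0 ≤ ξ₁) (hξ₂ : 0 ≤ ξ₂) (hslope : 0 < η₂ * ξ₁ - η₁ * ξ₂)
    (hcross : η₁ - η₂ = Θc * (η₂ * ξ₁ - η₁ * ξ₂)) :
    (response ρ η₂ ξ₂ Θ < response ρ η₁ ξ₁ Θ ↔ Θ < Θc) ∧
      (response ρ η₁ ξ₁ Θ < response ρ η₂ ξ₂ Θ ↔ Θc < Θ) := by
  have hgap₁ : η₁ * (1 + ξ₂ * Θ) - η₂ * (1 + ξ₁ * Θ) = (Θc - Θ) * (η₂ * ξ₁ - η₁ * ξ₂) := by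
    linear_combination hcross
  have hgap₂ : η₂ * (1 + ξ₁ * Θ) - η₁ * (1 + ξ₂ * Θ) = (Θ - Θc) * (η₂ * ξ₁ - η₁ * ξ₂) := by
    linear_combination -hcross
  rw [response_lt_response_iff hρ hΘ hξ₂ hξ₁, response_lt_response_iff hρ hΘ hξ₁ hξ₂]
  constructor
  · rw [← sub_pos, hgap₁, mul_pos_iff_of_pos_right hslope, sub_pos]
  · rw [← sub_pos, hgap₂, mul_pos_iff_of_pos_right hslope, sub_pos]

section Model

variable (asa aas aal alc als acs bls bcs : ℝ)

noncomputable def η₁ : ℝ := 1 / ((asa / (aas + aal)) * (1 + aal / als))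

noncomputable def ξ₁ : ℝ := (aal * bls / (als * (aas + aal))) * η₁ asa aas aal als

noncomputable def D : ℝ := 1 + aal / (als + alc) + aal * alc / ((als + alc) * acs)

noncomputable def η₂ : ℝ := (aas + aal) / (asa * D aal alc als acs)

noncomputable def ξ₂ : ℝ :=
  (bls * aal / (alc + als) + bcs * aal * alc / (acs * (alc + als))) / (asa * D aal alc als acs)

noncomputable def Θc : ℝ := asa * (1 - acs / als) / (bls * (acs / als - bcs / bls))

variable {asa aas aal alc als acs bls bcs}

lemma Θc_pos (hasa : 0 < asa) (hbls : 0 < bls) (hcond1 : acs / als < 1)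
    (hcond2 : bcs / bls < acs / als) : 0 < Θc asa als acs bls bcs :=
  div_pos (mul_pos hasa (sub_pos.2 hcond1)) (mul_pos hbls (sub_pos.2 hcond2))

lemma Θc_eq (hals : 0 < als) (hbls : 0 < bls) :
    Θc asa als acs bls bcs = asa * (als - acs) / (acs * bls - als * bcs) := by
  unfold Θc
  field_simp

variable (hasa : 0 < asa) (haas : 0 < aas) (haal : 0 < aal) (halc : 0 < alc)
  (hals : 0 < als) (hacs : 0 < acs)
include hasa haas haal halc hals hacs

lemma slope_eq :
    η₂ asa aas aal alc als acs * ξ₁ asa aas aal als bls -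
        η₁ asa aas aal als * ξ₂ asa aal alc als acs bls bcs =
      (aas + aal) * aal * alc * (acs * bls - als * bcs) /
        (asa ^ 2 * (als + aal) * (acs * (als + alc + aal) + aal * alc)) := by
  unfold ξ₁ η₁ η₂ ξ₂ D
  field_simp
  ring

lemma η₁_sub_η₂_eq :
    η₁ asa aas aal als - η₂ asa aas aal alc als acs =
      (aas + aal) * aal * alc * (als - acs) /
        (asa * (als + aal) * (acs * (als + alc + aal) + aal * alc)) := by
  unfold η₁ η₂ D
  field_simp
  ring

lemma slope_pos (h : bcs * als < acs * bls) :
    0 < η₂ asa aas aal alc als acs * ξ₁ asa aas aal als bls -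
      η₁ asa aas aal als * ξ₂ asa aal alc als acs bls bcs := by
  have : 0 < acs * bls - als * bcs := by linarith
  rw [slope_eq hasa haas haal halc hals hacs]
  positivity

lemma η₁_sub_η₂_eq_Θc_mul_slope (hbls : 0 < bls) (h : bcs * als < acs * bls) :
    η₁ asa aas aal als - η₂ asa aas aal alc als acs = Θc asa als acs bls bcs *
      (η₂ asa aas aal alc als acs * ξ₁ asa aas aal als bls -
        η₁ asa aas aal als * ξ₂ asa aal alc als acs bls bcs) := by
  have : acs * bls - als * bcs ≠ 0 := by linarith
  rw [slope_eq hasa haas haal halc hals hacs, η₁_sub_η₂_eq hasa haas haal halc hals hacs,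
    Θc_eq hals hbls]
  field_simp

end Model

end Switch

theorem stmt17_switch_d_general
    (asa aas aal alc als acs bls bcs ρ : ℝ)
    (hasa : 0 < asa) (haas : 0 < aas) (haal : 0 < aal) (halc : 0 < alc)
    (hals : 0 < als) (hacs : 0 < acs) (hbls : 0 < bls) (hbcs : 0 < bcs)
    (hρ : 0 < ρ)
    (hcond1 : acs / als < 1) (hcond2 : bcs / bls < acs / als) :
    let η₁ := 1 / ((asa / (aas + aal)) * (1 + aal / als))
    let ξ₁ := (aal * bls / (als * (aas + aal))) * (1 / ((asa / (aas + aal)) * (1 + aal / als)))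
    let D := 1 + aal / (als + alc) + aal * alc / ((als + alc) * acs)
    let η₂ := (aas + aal) / (asa * D)
    let ξ₂ := (bls * aal / (alc + als) + bcs * aal * alc / (acs * (alc + als))) / (asa * D)
    let N₁ := fun Θ : ℝ => Θ / ρ + Θ * η₁ / (ρ * (1 + ξ₁ * Θ))
    let N₂ := fun Θ : ℝ => Θ / ρ + Θ * η₂ / (ρ * (1 + ξ₂ * Θ))
    0 < asa * (1 - acs / als) / (bls * (acs / als - bcs / bls)) ∧
    (∀ Θ : ℝ, 0 < Θ → Θ < asa * (1 - acs / als) / (bls * (acs / als - bcs / bls)) → N₂ Θ < N₁ Θ) ∧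
    (∀ Θ : ℝ, asa * (1 - acs / als) / (bls * (acs / als - bcs / bls)) < Θ → N₁ Θ < N₂ Θ) := by
  intro η₁ ξ₁ D η₂ ξ₂ N₁ N₂
  have hcond2' : bcs * als < acs * bls := (div_lt_div_iff₀ hbls hals).1 hcond2
  have hΘc := Switch.Θc_pos hasa hbls hcond1 hcond2
  have hξ₁ : 0 ≤ ξ₁ := by positivity
  have hξ₂ : 0 ≤ ξ₂ := by positivity
  have hcrossing (Θ : ℝ) (hΘ : 0 < Θ) :=
    Switch.response_lt_response_iff_of_crossing hρ hΘ hξ₁ hξ₂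
      (Switch.slope_pos hasa haas haal halc hals hacs hcond2')
      (Switch.η₁_sub_η₂_eq_Θc_mul_slope hasa haas haal halc hals hacs hbls hcond2')
  exact ⟨hΘc, fun Θ hΘ hlt => (hcrossing Θ hΘ).1.2 hlt,
    fun Θ hgt => (hcrossing Θ (hΘc.trans hgt)).2.2 hgt⟩

theorem stmt17_switch_d
    (asa aas aal alc als acs bls bcs ρ : ℝ)
    (hasa : 0 < asa) (haas : 0 < aas) (haal : 0 < aal) (halc : 0 < alc)
    (hals : 0 < als) (hacs : 0 < acs) (hbls : 0 < bls) (hbcs : 0 < bcs)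
    (hρ : 0 < ρ) (hρ1 : ρ < 1)
    (hcond1 : acs / als < 1) (hcond2 : bcs / bls < acs / als) :
    let η₁ := 1 / ((asa / (aas + aal)) * (1 + aal / als))
    let ξ₁ := (aal * bls / (als * (aas + aal))) * (1 / ((asa / (aas + aal)) * (1 + aal / als)))
    let D := 1 + aal / (als + alc) + aal * alc / ((als + alc) * acs)
    let η₂ := (aas + aal) / (asa * D)
    let ξ₂ := (bls * aal / (alc + als) + bcs * aal * alc / (acs * (alc + als))) / (asa * D)
    let N₁ := fun Θ : ℝ => Θ / ρ + Θ * η₁ / (ρ * (1 + ξ₁ * Θ))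
    let N₂ := fun Θ : ℝ => Θ / ρ + Θ * η₂ / (ρ * (1 + ξ₂ * Θ))
    0 < asa * (1 - acs / als) / (bls * (acs / als - bcs / bls)) ∧
    (∀ Θ : ℝ, 0 < Θ → Θ < asa * (1 - acs / als) / (bls * (acs / als - bcs / bls)) → N₂ Θ < N₁ Θ) ∧
    (∀ Θ : ℝ, asa * (1 - acs / als) / (bls * (acs / als - bcs / bls)) < Θ → N₁ Θ < N₂ Θ) :=
  stmt17_switch_d_general asa aas aal alc als acs bls bcs ρ hasa haas haal halc hals hacs hbls hbcs
    hρ hcond1 hcond2
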